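/- The immersion number of P_6□P_6 (the Cartesian product of two paths on 6 vertices) equals 5. -/

import Mathlib

set_option linter.unusedVariables false

open SimpleGraph

/-- A graph `G` has a `K_t`-immersion: `t` terminal vertices (injective `φ`) together with
pairwise edge-disjoint paths joining every pair of terminals. -/
def HasCliqueImmersion {V : Type*} (G : SimpleGraph V) (t : ℕ) : Prop :=
  ∃ φ : Fin t → V, Function.Injective φ ∧
    ∃ P : ∀ i j : Fin t, G.Walk (φ i) (φ j),
      (∀ i j : Fin t, i < j → (P i j).IsPath) ∧
      (∀ i j k l : Fin t, i < j → k < l → (i, j) ≠ (k, l) →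
        List.Disjoint (P i j).edges (P k l).edges)

/-- The immersion number of `G`: the largest `t` such that `G` has a `K_t`-immersion. -/
noncomputable def immersionNumber {V : Type*} (G : SimpleGraph V) : ℕ :=
  sSup {t | HasCliqueImmersion G t}

/-- Lexicographic product. -/
def lexProd {α β : Type*} (G : SimpleGraph α) (H : SimpleGraph β) :
    SimpleGraph (α × β) where
  Adj x y := G.Adj x.1 y.1 ∨ (x.1 = y.1 ∧ H.Adj x.2 y.2)
  symm := by constructor; rintro x y (h | ⟨h1, h2⟩); exact Or.inl h.symm; exact Or.inr ⟨h1.symm, h2.symm⟩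
  loopless := by constructor; rintro x (h | ⟨-, h⟩) <;> exact h.ne rfl

/-- Direct (tensor) product. -/
def directProd {α β : Type*} (G : SimpleGraph α) (H : SimpleGraph β) :
    SimpleGraph (α × β) where
  Adj x y := G.Adj x.1 y.1 ∧ H.Adj x.2 y.2
  symm := by constructor; rintro x y ⟨h1, h2⟩; exact ⟨h1.symm, h2.symm⟩
  loopless := by constructor; rintro x ⟨h, -⟩; exact h.ne rfl

/-- Strong product. -/
def strongProd {α β : Type*} (G : SimpleGraph α) (H : SimpleGraph β) :
    SimpleGraph (α × β) :=
  (G.boxProd H) ⊔ (directProd G H)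

/-- Cartesian power: `d`-fold Cartesian (box) product of `G` with itself. -/
def boxPow {α : Type*} (G : SimpleGraph α) (d : ℕ) : SimpleGraph (Fin d → α) where
  Adj x y := ∃ i, G.Adj (x i) (y i) ∧ ∀ j, j ≠ i → x j = y j
  symm := by constructor; rintro x y ⟨i, h, hj⟩; exact ⟨i, h.symm, fun j hji => (hj j hji).symm⟩
  loopless := by constructor; rintro x ⟨i, h, -⟩; exact h.ne rfl

instance {α β : Type*} [DecidableEq α] (G : SimpleGraph α) (H : SimpleGraph β)
    [DecidableRel G.Adj] [DecidableRel H.Adj] : DecidableRel (lexProd G H).Adj :=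
  fun x y => inferInstanceAs (Decidable (_ ∨ _))

instance {α β : Type*} (G : SimpleGraph α) (H : SimpleGraph β)
    [DecidableRel G.Adj] [DecidableRel H.Adj] : DecidableRel (directProd G H).Adj :=
  fun x y => inferInstanceAs (Decidable (_ ∧ _))

instance {α β : Type*} [DecidableEq α] [DecidableEq β] (G : SimpleGraph α) (H : SimpleGraph β)
    [DecidableRel G.Adj] [DecidableRel H.Adj] : DecidableRel (G.boxProd H).Adj :=
  fun x y => decidable_of_iff _ (SimpleGraph.boxProd_adj).symm

instance {α β : Type*} [DecidableEq α] [DecidableEq β] (G : SimpleGraph α) (H : SimpleGraph β)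
    [DecidableRel G.Adj] [DecidableRel H.Adj] : DecidableRel (strongProd G H).Adj :=
  fun x y => inferInstanceAs (Decidable (_ ∨ _))


instance (n : ℕ) : DecidableRel (SimpleGraph.pathGraph n).Adj :=
  fun u v => decidable_of_iff _ (SimpleGraph.pathGraph_adj).symm

abbrev G6 : SimpleGraph (Fin 6 × Fin 6) :=
  (SimpleGraph.pathGraph 6).boxProd (SimpleGraph.pathGraph 6)

def phi5 : Fin 5 → Fin 6 × Fin 6
  | ⟨0,_⟩ => (1, 4)
  | ⟨1,_⟩ => (2, 1)
  | ⟨2,_⟩ => (2, 2)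
  | ⟨3,_⟩ => (3, 2)
  | ⟨4,_⟩ => (4, 2)

def w01 : G6.Walk ((1 : Fin 6), (4 : Fin 6)) ((2 : Fin 6), (1 : Fin 6)) :=
  Walk.cons (u := ((1 : Fin 6), (4 : Fin 6))) (by decide) (Walk.cons (u := ((0 : Fin 6), (4 : Fin 6))) (by decide) (Walk.cons (u := ((0 : Fin 6), (3 : Fin 6))) (by decide) (Walk.cons (u := ((0 : Fin 6), (2 : Fin 6))) (by decide) (Walk.cons (u := ((1 : Fin 6), (2 : Fin 6))) (by decide) (Walk.cons (u := ((1 : Fin 6), (1 : Fin 6))) (by decide) ((Walk.nil : G6.Walk ((2 : Fin 6), (1 : Fin 6)) ((2 : Fin 6), (1 : Fin 6)))))))))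

def w02 : G6.Walk ((1 : Fin 6), (4 : Fin 6)) ((2 : Fin 6), (2 : Fin 6)) :=
  Walk.cons (u := ((1 : Fin 6), (4 : Fin 6))) (by decide) (Walk.cons (u := ((1 : Fin 6), (3 : Fin 6))) (by decide) (Walk.cons (u := ((1 : Fin 6), (2 : Fin 6))) (by decide) ((Walk.nil : G6.Walk ((2 : Fin 6), (2 : Fin 6)) ((2 : Fin 6), (2 : Fin 6))))))

def w03 : G6.Walk ((1 : Fin 6), (4 : Fin 6)) ((3 : Fin 6), (2 : Fin 6)) :=
  Walk.cons (u := ((1 : Fin 6), (4 : Fin 6))) (by decide) (Walk.cons (u := ((1 : Fin 6), (5 : Fin 6))) (by decide) (Walk.cons (u := ((2 : Fin 6), (5 : Fin 6))) (by decide) (Walk.cons (u := ((3 : Fin 6), (5 : Fin 6))) (by decide) (Walk.cons (u := ((3 : Fin 6), (4 : Fin 6))) (by decide) (Walk.cons (u := ((3 : Fin 6), (3 : Fin 6))) (by decide) ((Walk.nil : G6.Walk ((3 : Fin 6), (2 : Fin 6)) ((3 : Fin 6), (2 : Fin 6)))))))))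

def w04 : G6.Walk ((1 : Fin 6), (4 : Fin 6)) ((4 : Fin 6), (2 : Fin 6)) :=
  Walk.cons (u := ((1 : Fin 6), (4 : Fin 6))) (by decide) (Walk.cons (u := ((2 : Fin 6), (4 : Fin 6))) (by decide) (Walk.cons (u := ((3 : Fin 6), (4 : Fin 6))) (by decide) (Walk.cons (u := ((4 : Fin 6), (4 : Fin 6))) (by decide) (Walk.cons (u := ((5 : Fin 6), (4 : Fin 6))) (by decide) (Walk.cons (u := ((5 : Fin 6), (3 : Fin 6))) (by decide) (Walk.cons (u := ((5 : Fin 6), (2 : Fin 6))) (by decide) ((Walk.nil : G6.Walk ((4 : Fin 6), (2 : Fin 6)) ((4 : Fin 6), (2 : Fin 6))))))))))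

def w12 : G6.Walk ((2 : Fin 6), (1 : Fin 6)) ((2 : Fin 6), (2 : Fin 6)) :=
  Walk.cons (u := ((2 : Fin 6), (1 : Fin 6))) (by decide) ((Walk.nil : G6.Walk ((2 : Fin 6), (2 : Fin 6)) ((2 : Fin 6), (2 : Fin 6))))

def w13 : G6.Walk ((2 : Fin 6), (1 : Fin 6)) ((3 : Fin 6), (2 : Fin 6)) :=
  Walk.cons (u := ((2 : Fin 6), (1 : Fin 6))) (by decide) (Walk.cons (u := ((2 : Fin 6), (0 : Fin 6))) (by decide) (Walk.cons (u := ((3 : Fin 6), (0 : Fin 6))) (by decide) (Walk.cons (u := ((3 : Fin 6), (1 : Fin 6))) (by decide) ((Walk.nil : G6.Walk ((3 : Fin 6), (2 : Fin 6)) ((3 : Fin 6), (2 : Fin 6)))))))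

def w14 : G6.Walk ((2 : Fin 6), (1 : Fin 6)) ((4 : Fin 6), (2 : Fin 6)) :=
  Walk.cons (u := ((2 : Fin 6), (1 : Fin 6))) (by decide) (Walk.cons (u := ((3 : Fin 6), (1 : Fin 6))) (by decide) (Walk.cons (u := ((4 : Fin 6), (1 : Fin 6))) (by decide) ((Walk.nil : G6.Walk ((4 : Fin 6), (2 : Fin 6)) ((4 : Fin 6), (2 : Fin 6))))))

def w23 : G6.Walk ((2 : Fin 6), (2 : Fin 6)) ((3 : Fin 6), (2 : Fin 6)) :=
  Walk.cons (u := ((2 : Fin 6), (2 : Fin 6))) (by decide) ((Walk.nil : G6.Walk ((3 : Fin 6), (2 : Fin 6)) ((3 : Fin 6), (2 : Fin 6))))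

def w24 : G6.Walk ((2 : Fin 6), (2 : Fin 6)) ((4 : Fin 6), (2 : Fin 6)) :=
  Walk.cons (u := ((2 : Fin 6), (2 : Fin 6))) (by decide) (Walk.cons (u := ((2 : Fin 6), (3 : Fin 6))) (by decide) (Walk.cons (u := ((3 : Fin 6), (3 : Fin 6))) (by decide) (Walk.cons (u := ((4 : Fin 6), (3 : Fin 6))) (by decide) ((Walk.nil : G6.Walk ((4 : Fin 6), (2 : Fin 6)) ((4 : Fin 6), (2 : Fin 6)))))))

def w34 : G6.Walk ((3 : Fin 6), (2 : Fin 6)) ((4 : Fin 6), (2 : Fin 6)) :=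
  Walk.cons (u := ((3 : Fin 6), (2 : Fin 6))) (by decide) ((Walk.nil : G6.Walk ((4 : Fin 6), (2 : Fin 6)) ((4 : Fin 6), (2 : Fin 6))))

def Pf : ∀ i j : Fin 5, G6.Walk (phi5 i) (phi5 j)
  | ⟨0,_⟩, ⟨0,_⟩ => Walk.nil
  | ⟨0,_⟩, ⟨1,_⟩ => w01
  | ⟨0,_⟩, ⟨2,_⟩ => w02
  | ⟨0,_⟩, ⟨3,_⟩ => w03
  | ⟨0,_⟩, ⟨4,_⟩ => w04
  | ⟨1,_⟩, ⟨0,_⟩ => w01.reverse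
  | ⟨1,_⟩, ⟨1,_⟩ => Walk.nil
  | ⟨1,_⟩, ⟨2,_⟩ => w12
  | ⟨1,_⟩, ⟨3,_⟩ => w13
  | ⟨1,_⟩, ⟨4,_⟩ => w14
  | ⟨2,_⟩, ⟨0,_⟩ => w02.reverse
  | ⟨2,_⟩, ⟨1,_⟩ => w12.reverse
  | ⟨2,_⟩, ⟨2,_⟩ => Walk.nil
  | ⟨2,_⟩, ⟨3,_⟩ => w23
  | ⟨2,_⟩, ⟨4,_⟩ => w24
  | ⟨3,_⟩, ⟨0,_⟩ => w03.reverse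
  | ⟨3,_⟩, ⟨1,_⟩ => w13.reverse
  | ⟨3,_⟩, ⟨2,_⟩ => w23.reverse
  | ⟨3,_⟩, ⟨3,_⟩ => Walk.nil
  | ⟨3,_⟩, ⟨4,_⟩ => w34
  | ⟨4,_⟩, ⟨0,_⟩ => w04.reverse
  | ⟨4,_⟩, ⟨1,_⟩ => w14.reverse
  | ⟨4,_⟩, ⟨2,_⟩ => w24.reverse
  | ⟨4,_⟩, ⟨3,_⟩ => w34.reverse
  | ⟨4,_⟩, ⟨4,_⟩ => Walk.nil


set_option maxRecDepth 100000 in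
set_option maxHeartbeats 4000000 in
lemma lower5 : HasCliqueImmersion G6 5 := by
  refine ⟨phi5, by decide, Pf, ?_, ?_⟩
  · have h : ∀ i j : Fin 5, i < j → (Pf i j).support.Nodup := by decide
    exact fun i j hij => (SimpleGraph.Walk.isPath_def _).mpr (h i j hij)
  · have h : ∀ i j k l : Fin 5, i < j → k < l → (i, j) ≠ (k, l) →
      ∀ e ∈ (Pf i j).edges, e ∉ (Pf k l).edges := by decide
    exact fun i j k l h1 h2 h3 => h i j k l h1 h2 h3

set_option maxRecDepth 100000 in
lemma deg_le4 : ∀ v, G6.degree v ≤ 4 := by decide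

lemma first_edge {V : Type*} {G : SimpleGraph V} {u v : V} (w : G.Walk u v) (h : u ≠ v) :
    ∃ e ∈ w.edges, u ∈ e ∧ e ∈ G.edgeSet := by
  cases w with
  | nil => exact absurd rfl h
  | cons hadj p => exact ⟨s(u, _), by simp, by simp, hadj⟩

lemma upper5 : ∀ t, HasCliqueImmersion G6 t → t ≤ 5 := by
  intro t ⟨φ, hinj, P, hpath, hdisj⟩
  by_contra hlt
  push_neg at hlt
  set z : Fin t := ⟨0, by omega⟩ with hz
  have hJ : ∀ k : Fin 5, k.val + 1 < t := fun k => by omega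
  let J : Fin 5 → Fin t := fun k => ⟨k.val + 1, hJ k⟩
  have hzJ : ∀ k, z < J k := fun k => by show (0:ℕ) < k.val + 1; omega
  have hne : ∀ k, φ z ≠ φ (J k) := fun k h => by
    have := congrArg Fin.val (hinj h)
    exact absurd this (by show (0:ℕ) ≠ k.val + 1; omega)
  choose e he hue hGe using fun k => first_edge (P z (J k)) (hne k)
  have einj : Function.Injective e := by
    intro k k' hkk'
    by_contra hne'
    have hJne : (z, J k) ≠ (z, J k') := by
      simp [J, Fin.ext_iff]
      intro h; exact hne' (Fin.ext h)
    exact (hdisj z (J k) z (J k') (hzJ k) (hzJ k') hJne) (he k) (hkk' ▸ he k')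
  have hsub : ∀ k, e k ∈ G6.incidenceFinset (φ z) := by
    intro k
    rw [SimpleGraph.mem_incidenceFinset]
    exact ⟨hGe k, hue k⟩
  have hcard : (5 : ℕ) ≤ G6.degree (φ z) := by
    have := Finset.card_le_card_of_injOn (s := (Finset.univ : Finset (Fin 5))) (t := G6.incidenceFinset (φ z)) e (fun k _ => hsub k) (fun a _ b _ h => einj h)
    simpa [SimpleGraph.card_incidenceFinset_eq_degree] using this
  exact absurd (hcard.trans (deg_le4 (φ z))) (by norm_num)

theorem immersion_P6_boxProd_P6 :
    immersionNumber ((SimpleGraph.pathGraph 6).boxProd (SimpleGraph.pathGraph 6)) = 5 := by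
  have hub : ∀ t ∈ {t | HasCliqueImmersion G6 t}, t ≤ 5 := fun t ht => upper5 t ht
  exact le_antisymm (csSup_le ⟨5, lower5⟩ hub) (le_csSup ⟨5, hub⟩ lower5)
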